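/- Suppose B ⊆ {1, …, y} is a set such that for every prime p ≤ z there is a residue class mod p containing no element of B (with z ≤ y). Then there exists a subset A ⊆ B that is admissible (i.e., for every prime p there is a residue class mod p avoided by A) with |A| ≥ ∏_{z < p ≤ y} (1 − 1/p) · |B|. -/

import Mathlib

/-!
Sieve by the primes `p ∈ (z, y]` one at a time: by pigeonhole some residue class modulo `p`
holds at most a `1/p` fraction of the current set, and we delete it. Primes `p ≤ z` are already
missed by `B`, and primes `p > y` miss the class of `0` because `B ⊆ [1, y]`.
-/

open Finset

def MissesResidueClass (A : Finset ℕ) (p : ℕ) : Prop :=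
  ∃ a : ℤ, ∀ b ∈ A, ¬ (b : ℤ) ≡ a [ZMOD p]

theorem MissesResidueClass.mono {A B : Finset ℕ} {p : ℕ} (hB : MissesResidueClass B p)
    (hAB : A ⊆ B) : MissesResidueClass A p :=
  let ⟨a, ha⟩ := hB
  ⟨a, fun b hb => ha b (hAB hb)⟩

theorem missesResidueClass_of_forall_mem_Ioo {A : Finset ℕ} {p : ℕ}
    (hA : ∀ b ∈ A, b ∈ Set.Ioo 0 p) : MissesResidueClass A p := by
  refine ⟨0, fun b hb hmod => ?_⟩
  obtain ⟨hb0, hbp⟩ := hA b hb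
  have hdvd : p ∣ b := by exact_mod_cast Int.modEq_zero_iff_dvd.mp hmod
  exact absurd (Nat.le_of_dvd hb0 hdvd) (not_le.mpr hbp)

theorem one_sub_one_div_natCast_nonneg (p : ℕ) : (0 : ℝ) ≤ 1 - 1 / p := by
  rcases p.eq_zero_or_pos with rfl | hp
  · simp
  · rw [sub_nonneg, div_le_one (by exact_mod_cast hp)]
    exact_mod_cast hp

theorem exists_subset_missesResidueClass (p : ℕ) [NeZero p] (B : Finset ℕ) :
    ∃ B' ⊆ B, MissesResidueClass B' p ∧ (1 - 1 / (p : ℝ)) * #B ≤ #B' := by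
  have hp : (0 : ℝ) < p := by exact_mod_cast Nat.pos_of_neZero p
  obtain ⟨a, -, ha⟩ := exists_card_fiber_le_of_card_le_nsmul (f := fun b : ℕ => (b : ZMod p))
    (s := B) (t := univ) (b := (#B : ℝ) / p) univ_nonempty
    (by rw [card_univ, ZMod.card, nsmul_eq_mul, mul_div_cancel₀ _ hp.ne'])
  refine ⟨B.filter fun b => ¬ (b : ZMod p) = a, filter_subset _ _, ⟨a.val, fun b hb hmod => ?_⟩, ?_⟩
  · refine (mem_filter.mp hb).2 ?_
    simpa using (ZMod.intCast_eq_intCast_iff _ _ _).mpr hmod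
  · have hsplit := card_filter_add_card_filter_not (s := B) fun b => (b : ZMod p) = a
    have hsplit' := congrArg (Nat.cast : ℕ → ℝ) hsplit
    push_cast at hsplit'
    rw [sub_mul, one_div_mul_eq_div, one_mul]
    linarith

theorem exists_subset_forall_missesResidueClass (S : Finset ℕ) (hS : ∀ p ∈ S, p ≠ 0)
    (B : Finset ℕ) :
    ∃ A ⊆ B, (∀ p ∈ S, MissesResidueClass A p) ∧ (∏ p ∈ S, (1 - 1 / (p : ℝ))) * #B ≤ #A := by
  induction S using Finset.induction_on generalizing B with
  | empty => exact ⟨B, Subset.refl _, by simp, by simp⟩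
  | @insert p S hpS ih =>
    have : NeZero p := ⟨hS p (mem_insert_self _ _)⟩
    obtain ⟨B', hB'B, hB'p, hB'card⟩ := exists_subset_missesResidueClass p B
    obtain ⟨A, hAB', hAS, hAcard⟩ := ih (fun q hq => hS q (mem_insert_of_mem hq)) B'
    refine ⟨A, hAB'.trans hB'B, ?_, ?_⟩
    · intro q hq
      rcases mem_insert.mp hq with rfl | hq
      · exact hB'p.mono hAB'
      · exact hAS q hq
    · have hprod : 0 ≤ ∏ q ∈ S, (1 - 1 / (q : ℝ)) :=
        prod_nonneg fun q _ => one_sub_one_div_natCast_nonneg q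
      calc (∏ q ∈ insert p S, (1 - 1 / (q : ℝ))) * #B
          = (∏ q ∈ S, (1 - 1 / (q : ℝ))) * ((1 - 1 / (p : ℝ)) * #B) := by
            rw [prod_insert hpS]; ring
        _ ≤ (∏ q ∈ S, (1 - 1 / (q : ℝ))) * #B' := mul_le_mul_of_nonneg_left hB'card hprod
        _ ≤ #A := hAcard

theorem stmt_12_general (y z : ℕ) (B : Finset ℕ)
    (hB : B ⊆ Finset.Icc 1 y)
    (hsieved : ∀ p : ℕ, p.Prime → p ≤ z →
      ∃ a : ℤ, ∀ b ∈ B, ¬ (b : ℤ) ≡ a [ZMOD p]) :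
    ∃ A : Finset ℕ, A ⊆ B ∧
      (∀ p : ℕ, p.Prime → ∃ a : ℤ, ∀ b ∈ A, ¬ (b : ℤ) ≡ a [ZMOD p]) ∧
      (∏ p ∈ (Finset.Ioc z y).filter Nat.Prime, (1 - 1 / (p : ℝ))) * B.card ≤
        A.card := by
  obtain ⟨A, hAB, hAsieved, hAcard⟩ := exists_subset_forall_missesResidueClass
    ((Ioc z y).filter Nat.Prime) (fun p hp => (mem_filter.mp hp).2.ne_zero) B
  refine ⟨A, hAB, fun p hp => ?_, hAcard⟩
  rcases le_or_gt p z with hpz | hzp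
  · exact MissesResidueClass.mono (hsieved p hp hpz) hAB
  rcases le_or_gt p y with hpy | hyp
  · exact hAsieved p (mem_filter.mpr ⟨mem_Ioc.mpr ⟨hzp, hpy⟩, hp⟩)
  · refine missesResidueClass_of_forall_mem_Ioo fun b hb => ?_
    obtain ⟨hb1, hby⟩ := mem_Icc.mp (hB (hAB hb))
    exact ⟨hb1, hby.trans_lt hyp⟩

/-- If `B ⊆ {1, …, y}` avoids a residue class mod `p` for every prime `p ≤ z`
(with `z ≤ y`), then there is an admissible subset `A ⊆ B` with
`|A| ≥ ∏_{z < p ≤ y} (1 - 1/p) · |B|`. -/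
theorem stmt_12 (y z : ℕ) (hzy : z ≤ y) (B : Finset ℕ)
    (hB : B ⊆ Finset.Icc 1 y)
    (hsieved : ∀ p : ℕ, p.Prime → p ≤ z →
      ∃ a : ℤ, ∀ b ∈ B, ¬ (b : ℤ) ≡ a [ZMOD p]) :
    ∃ A : Finset ℕ, A ⊆ B ∧
      (∀ p : ℕ, p.Prime → ∃ a : ℤ, ∀ b ∈ A, ¬ (b : ℤ) ≡ a [ZMOD p]) ∧
      (∏ p ∈ (Finset.Ioc z y).filter Nat.Prime, (1 - 1 / (p : ℝ))) * B.card ≤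
        A.card :=
  stmt_12_general y z B hB hsieved
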